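/- arXiv:1202.1175 — 4 statements merged into one kernel-verified Lean document; each statement's English description precedes it below -/
import Mathlib

section
/- Let Y be a compact metrizable space, Y₁ ⊆ Y a closed subset, n ≥ 1, Xₙ = Fin n discrete, and Z = Xₙ × Y. Then the quotient space Z/∼ is metrizable. -/
/-- The identification relation on `Fin n × Y`: `(x', y') ∼ (x'', y'')` iff
`y' = y''` and (`y' ∈ Y₁` or `x' = x''`). -/
def paperRel (n : ℕ) {Y : Type*} (Y₁ : Set Y) (z₁ z₂ : Fin n × Y) : Prop :=
  z₁.2 = z₂.2 ∧ (z₁.2 ∈ Y₁ ∨ z₁.1 = z₂.1)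

/-!
Since `Y` is perfectly normal, `Y₁` is the zero set of a continuous `φ : Y → ℝ`. The map
`(x, y) ↦ (y, φ y • eₓ)` from `Fin n × Y` to `Y × ℝⁿ` identifies exactly the `∼`-related
points, so it descends to a continuous injection of the compact quotient into the metrizable
space `Y × ℝⁿ`, which is then a closed embedding.
-/

open Topology

section WeightedCopy

variable {Y : Type*} {n : ℕ} {Y₁ : Set Y} {φ : Y → ℝ}

noncomputable def weightedCopy (φ : Y → ℝ) (z : Fin n × Y) : Y × (Fin n → ℝ) :=
  (z.2, Pi.single z.1 (φ z.2))

theorem continuous_weightedCopy [TopologicalSpace Y] (hφ : Continuous φ) :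
    Continuous (weightedCopy (n := n) φ) :=
  continuous_snd.prodMk <| continuous_prod_of_discrete_left.2 fun x =>
    (continuous_single x).comp hφ

theorem weightedCopy_eq_iff (hY₁ : Y₁ = φ ⁻¹' {0}) {z₁ z₂ : Fin n × Y} :
    weightedCopy φ z₁ = weightedCopy φ z₂ ↔ paperRel n Y₁ z₁ z₂ := by
  obtain ⟨x₁, y₁⟩ := z₁
  obtain ⟨x₂, y₂⟩ := z₂
  simp only [weightedCopy, paperRel, Prod.mk.injEq, hY₁, Set.mem_preimage,
    Set.mem_singleton_iff]
  constructor
  · rintro ⟨rfl, hsingle⟩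
    refine ⟨rfl, or_iff_not_imp_right.2 fun hx => ?_⟩
    simpa [Pi.single_apply, Ne.symm hx] using congrFun hsingle x₁
  · rintro ⟨rfl, hφy | rfl⟩
    · simp [hφy]
    · exact ⟨rfl, rfl⟩

theorem isClosedEmbedding_quotLift_weightedCopy [TopologicalSpace Y] [CompactSpace Y]
    [T2Space Y] (hφ : Continuous φ) (hY₁ : Y₁ = φ ⁻¹' {0}) :
    IsClosedEmbedding (Quot.lift (weightedCopy (n := n) φ)
      fun _ _ h => (weightedCopy_eq_iff hY₁).2 h) := by
  refine (continuous_quot_lift _ (continuous_weightedCopy hφ)).isClosedEmbedding ?_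
  rintro ⟨z₁⟩ ⟨z₂⟩ h
  exact Quot.sound ((weightedCopy_eq_iff hY₁).1 h)

end WeightedCopy

theorem quotient_metrizableSpace_general {Y : Type*} [TopologicalSpace Y] [CompactSpace Y]
    [TopologicalSpace.MetrizableSpace Y] (Y₁ : Set Y) (hY₁ : IsClosed Y₁)
    (n : ℕ) :
    TopologicalSpace.MetrizableSpace (Quot (paperRel n Y₁)) := by
  obtain ⟨φ, hY₁φ, -⟩ :=
    perfectlyNormalSpace_iff_forall_isClosed_preimage_zero.1 inferInstance Y₁ hY₁
  exact (isClosedEmbedding_quotLift_weightedCopy φ.continuous hY₁φ).isEmbedding.metrizableSpace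

/-- For a compact metrizable space `Y`, a closed subset `Y₁ ⊆ Y`, and
`Z = Fin n × Y`, the quotient space `Z/∼` is metrizable. -/
theorem quotient_metrizableSpace {Y : Type*} [TopologicalSpace Y] [CompactSpace Y]
    [TopologicalSpace.MetrizableSpace Y] (Y₁ : Set Y) (hY₁ : IsClosed Y₁)
    (n : ℕ) (hn : 0 < n) :
    TopologicalSpace.MetrizableSpace (Quot (paperRel n Y₁)) :=
  quotient_metrizableSpace_general Y₁ hY₁ n
end

section
/- Let Y be a compact Hausdorff space that is connected, let Y₁ ⊆ Y be a closed subset that is nonempty, let n ≥ 1, Xₙ = Fin n discrete, and Z = Xₙ × Y. Then the quotient space Z/∼ is connected. -/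
/-! The quotient is the union of the images of the connected slices `{i} × Y`, and all these
images pass through the single class of `(i, y₀)` for any `y₀ ∈ Y₁`. -/

theorem connectedSpace_quot_prod_of_mk_eq {ι Y : Type*} [TopologicalSpace ι]
    [TopologicalSpace Y] [Nonempty ι] [PreconnectedSpace Y] (r : ι × Y → ι × Y → Prop) (y₀ : Y)
    (h : ∀ i j, Quot.mk r (i, y₀) = Quot.mk r (j, y₀)) : ConnectedSpace (Quot r) := by
  obtain ⟨i₀⟩ := ‹Nonempty ι›
  have hcover : (Set.univ : Set (Quot r)) = ⋃ i, Set.range fun y => Quot.mk r (i, y) := by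
    refine (Set.eq_univ_of_forall fun z => ?_).symm
    obtain ⟨⟨i, y⟩, rfl⟩ := Quot.mk_surjective z
    exact Set.mem_iUnion.2 ⟨i, y, rfl⟩
  have hpre : IsPreconnected (Set.univ : Set (Quot r)) := by
    rw [hcover]
    refine isPreconnected_iUnion ⟨Quot.mk r (i₀, y₀), Set.mem_iInter.2 fun i => ⟨y₀, h i i₀⟩⟩
      fun i => isPreconnected_range (continuous_quot_mk.comp (Continuous.prodMk_right i))
  have : PreconnectedSpace (Quot r) := ⟨hpre⟩
  exact ⟨⟨Quot.mk r (i₀, y₀)⟩⟩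

theorem paperRel_mk_eq_of_mem {n : ℕ} {Y : Type*} {Y₁ : Set Y} {y : Y} (hy : y ∈ Y₁)
    (i j : Fin n) : Quot.mk (paperRel n Y₁) (i, y) = Quot.mk (paperRel n Y₁) (j, y) :=
  Quot.sound ⟨rfl, Or.inl hy⟩

theorem quotient_connectedSpace_general {Y : Type*} [TopologicalSpace Y] [ConnectedSpace Y] (Y₁ : Set Y)
    (hY₁ne : Y₁.Nonempty) (n : ℕ) (hn : 0 < n) :
    ConnectedSpace (Quot (paperRel n Y₁)) := by
  obtain ⟨y₀, hy₀⟩ := hY₁ne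
  have : Nonempty (Fin n) := Fin.pos_iff_nonempty.mp hn
  exact connectedSpace_quot_prod_of_mk_eq _ y₀ (paperRel_mk_eq_of_mem hy₀)

/-- For a connected compact Hausdorff space `Y` and a nonempty closed
subset `Y₁ ⊆ Y`, the quotient space `Z/∼` of `Z = Fin n × Y` is connected. -/
theorem quotient_connectedSpace {Y : Type*} [TopologicalSpace Y] [CompactSpace Y]
    [T2Space Y] [ConnectedSpace Y] (Y₁ : Set Y) (hY₁ : IsClosed Y₁)
    (hY₁ne : Y₁.Nonempty) (n : ℕ) (hn : 0 < n) :
    ConnectedSpace (Quot (paperRel n Y₁)) :=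
  quotient_connectedSpace_general Y₁ hY₁ne n hn
end

section
/- Let Y be a compact Hausdorff space, n ≥ 1, Xₙ = Fin n discrete, Z = Xₙ × Y, let A be a unital C*-algebra, and let (a_{ij})_{1 ≤ i,j ≤ n} be a magic unitary in A. Then the map α : C(Z, ℂ) → C(Z, A) defined by α(F)(x_k, y) = Σ_{i=1}^n F(x_i, y) a_{ki} is a unital star-algebra homomorphism (ℂ-linear, multiplicative, unital, and star-preserving). -/
/-!
Each row `(a_{k i})_i` of a magic unitary is a family of projections summing to `1`, and in a
C⋆-algebra such projections are mutually orthogonal. Hence the product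
`α(F)(x_k, y) α(G)(x_k, y) = ∑ i, ∑ j, F(x_i, y) G(x_j, y) a_{k i} a_{k j}` collapses to its
diagonal, which is `α(F G)(x_k, y)`. Unitality is the row sum, and `α` preserves stars because
the `a_{k i}` are self-adjoint.
-/

/-- The map `α : C(Fin n × Y, ℂ) → C(Fin n × Y, A)` determined by a family
`a : Fin n → Fin n → A` via `α(F)(x_k, y) = ∑ i, F(x_i, y) a_{k i}`. -/
noncomputable def alphaMap {Y : Type*} [TopologicalSpace Y] {A : Type*} [NormedRing A]
    [NormedAlgebra ℂ A] (n : ℕ) (a : Fin n → Fin n → A) (F : C(Fin n × Y, ℂ)) :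
    C(Fin n × Y, A) where
  toFun z := ∑ i, F (i, z.2) • a z.1 i
  continuous_toFun := by
    apply continuous_finset_sum
    intro i _
    exact (F.continuous.comp (continuous_const.prodMk continuous_snd)).smul
      (Continuous.comp (continuous_of_discreteTopology (f := fun k : Fin n => a k i))
        continuous_fst)

open Finset

/-- From `p_j = p_j (∑ l, p_l) p_j = ∑ l, (p_l p_j)⋆ (p_l p_j)` and `p_j p_j p_j = p_j`, the
remaining positive terms `(p_l p_j)⋆ (p_l p_j)` with `l ≠ j` sum to zero. -/
theorem IsStarProjection.pairwise_mul_eq_zero_of_sum_eq_one {ι A : Type*} [Fintype ι]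
    [NormedRing A] [StarRing A] [CStarRing A] [PartialOrder A] [StarOrderedRing A]
    {p : ι → A} (hp : ∀ i, IsStarProjection (p i)) (hsum : ∑ i, p i = 1) :
    Pairwise fun i j => p i * p j = 0 := by
  classical
  intro i j hij
  have hconj : ∀ l, star (p l * p j) * (p l * p j) = p j * p l * p j := fun l => by
    rw [star_mul, (hp j).isSelfAdjoint.star_eq, (hp l).isSelfAdjoint.star_eq, mul_assoc,
      ← mul_assoc (p l), (hp l).isIdempotentElem.eq, mul_assoc]
  have htotal : ∑ l, star (p l * p j) * (p l * p j) = p j := by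
    simp only [hconj, ← sum_mul, ← mul_sum, hsum, mul_one, (hp j).isIdempotentElem.eq]
  have hrest : ∑ l ∈ univ.erase j, star (p l * p j) * (p l * p j) = 0 := by
    rw [← add_sum_erase _ _ (mem_univ j), hconj, (hp j).isIdempotentElem.eq,
      (hp j).isIdempotentElem.eq] at htotal
    exact left_eq_add.mp htotal.symm
  have hterm := (sum_eq_zero_iff_of_nonneg fun l _ => star_mul_self_nonneg (p l * p j)).mp
    hrest i (mem_erase.mpr ⟨hij, mem_univ i⟩)
  exact (CStarRing.star_mul_self_eq_zero_iff _).mp hterm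

theorem sum_smul_mul_sum_smul_of_pairwise_mul_eq_zero {ι R A : Type*} [Fintype ι]
    [CommSemiring R] [Semiring A] [Module R A] [IsScalarTower R A A] [SMulCommClass R A A]
    {p : ι → A} (hidem : ∀ i, IsIdempotentElem (p i))
    (horth : Pairwise fun i j => p i * p j = 0)
    (f g : ι → R) : (∑ i, f i • p i) * (∑ i, g i • p i) = ∑ i, (f i * g i) • p i := by
  classical
  rw [sum_mul_sum]
  refine sum_congr rfl fun i _ => ?_
  rw [sum_eq_single i (fun j _ hji => by rw [smul_mul_smul, horth hji.symm, smul_zero])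
    (by simp), smul_mul_smul, (hidem i).eq]

theorem alphaMap_apply {Y A : Type*} [TopologicalSpace Y] [NormedRing A] [NormedAlgebra ℂ A]
    (n : ℕ) (a : Fin n → Fin n → A) (F : C(Fin n × Y, ℂ)) (z : Fin n × Y) :
    alphaMap n a F z = ∑ i, F (i, z.2) • a z.1 i :=
  rfl

theorem alphaMap_starAlgHom_general {Y : Type*} [TopologicalSpace Y]
    {A : Type*} [NormedRing A] [StarRing A] [CStarRing A] [NormedAlgebra ℂ A]
    [StarModule ℂ A] [CompleteSpace A] (n : ℕ) (a : Fin n → Fin n → A)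
    (haproj : ∀ i j, star (a i j) = a i j ∧ a i j * a i j = a i j)
    (harow : ∀ i, ∑ j, a i j = 1) :
    (∀ F G : C(Fin n × Y, ℂ), alphaMap n a (F + G) = alphaMap n a F + alphaMap n a G) ∧
    (∀ (c : ℂ) (F : C(Fin n × Y, ℂ)), alphaMap n a (c • F) = c • alphaMap n a F) ∧
    (∀ F G : C(Fin n × Y, ℂ), alphaMap n a (F * G) = alphaMap n a F * alphaMap n a G) ∧
    alphaMap (Y := Y) n a 1 = 1 ∧
    (∀ F : C(Fin n × Y, ℂ), alphaMap n a (star F) = star (alphaMap n a F)) := by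
  let _ : CStarAlgebra A := {}
  let _ := CStarAlgebra.spectralOrder A
  have := CStarAlgebra.spectralOrderedRing A
  have hproj : ∀ k i, IsStarProjection (a k i) := fun k i => ⟨(haproj k i).2, (haproj k i).1⟩
  have horth : ∀ k, Pairwise fun i j => a k i * a k j = 0 := fun k =>
    IsStarProjection.pairwise_mul_eq_zero_of_sum_eq_one (hproj k) (harow k)
  refine ⟨fun F G => ?_, fun c F => ?_, fun F G => ?_, ?_, fun F => ?_⟩ <;> ext z
  · simp [alphaMap_apply, add_smul, sum_add_distrib]
  · simp [alphaMap_apply, smul_smul, smul_sum]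
  · simp only [alphaMap_apply, ContinuousMap.mul_apply]
    exact (sum_smul_mul_sum_smul_of_pairwise_mul_eq_zero
      (fun i => (hproj z.1 i).isIdempotentElem) (horth z.1) _ _).symm
  · simp [alphaMap_apply, harow]
  · simp [alphaMap_apply, (hproj _ _).isSelfAdjoint.star_eq]

/-- If `(a_{ij})` is a magic unitary in a unital C*-algebra `A`, then
`α : C(Z, ℂ) → C(Z, A)`, `α(F)(x_k, y) = ∑ i, F(x_i, y) a_{k i}`, is a unital
star-algebra homomorphism: ℂ-linear, multiplicative, unital and star-preserving. -/
theorem alphaMap_starAlgHom {Y : Type*} [TopologicalSpace Y] [CompactSpace Y] [T2Space Y]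
    {A : Type*} [NormedRing A] [StarRing A] [CStarRing A] [NormedAlgebra ℂ A]
    [StarModule ℂ A] [CompleteSpace A] (n : ℕ) (hn : 0 < n) (a : Fin n → Fin n → A)
    (haproj : ∀ i j, star (a i j) = a i j ∧ a i j * a i j = a i j)
    (harow : ∀ i, ∑ j, a i j = 1) (hacol : ∀ j, ∑ i, a i j = 1) :
    (∀ F G : C(Fin n × Y, ℂ), alphaMap n a (F + G) = alphaMap n a F + alphaMap n a G) ∧
    (∀ (c : ℂ) (F : C(Fin n × Y, ℂ)), alphaMap n a (c • F) = c • alphaMap n a F) ∧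
    (∀ F G : C(Fin n × Y, ℂ), alphaMap n a (F * G) = alphaMap n a F * alphaMap n a G) ∧
    alphaMap (Y := Y) n a 1 = 1 ∧
    (∀ F : C(Fin n × Y, ℂ), alphaMap n a (star F) = star (alphaMap n a F)) :=
  alphaMap_starAlgHom_general n a haproj harow
end

section
/- Let Y be a compact Hausdorff space, n ≥ 1, Xₙ = Fin n discrete, Z = Xₙ × Y, A a unital C*-algebra, (a_{ij}) a magic unitary in A, and α : C(Z, ℂ) → C(Z, A) the map α(F)(x_k, y) = Σ_{i=1}^n F(x_i, y) a_{ki}. Then the linear span of the set {z ↦ α(F)(z) · a : F ∈ C(Z, ℂ), a ∈ A} is dense in C(Z, A) with respect to the supremum norm. -/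
/-!
Functions `z ↦ φ z • c` with `φ` real span a dense subspace of `C(Z, E)`: a partition of unity
subordinate to a finite cover on whose members `G` varies by less than `ε` yields such a sum within
`ε` of `G`. Each of them lies in the span of the `α(F) · b`, because the rows of a magic unitary
are orthonormal, `∑ j, a k j * a m j = δ k m` (the projections of a column sum to `1`, hence are
pairwise orthogonal), so that `φ (k, y) • c = ∑ m j, α(F m j) (k, y) * (a m j * c)` where
`F m j (i, y) = δ i j * φ (m, y)`.
-/

open Finset

theorem ContinuousMap.dense_span_smul_const {Z E : Type*} [TopologicalSpace Z] [CompactSpace Z]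
    [T2Space Z] [NormedAddCommGroup E] [NormedSpace ℝ E] :
    Dense (Submodule.span ℝ {h : C(Z, E) | ∃ (φ : C(Z, ℝ)) (c : E), h = φ • const Z c} :
      Set C(Z, E)) := by
  refine Metric.dense_iff.2 fun G ε hε => ?_
  set U : Z → Set Z := fun t => {z | dist (G t) (G z) < ε / 2}
  have hU : ∀ t, IsOpen (U t) := fun t => isOpen_lt (by fun_prop) continuous_const
  obtain ⟨T, hT⟩ := isCompact_univ.elim_finite_subcover U hU
    fun z _ => Set.mem_iUnion.2 ⟨z, by simpa [U] using half_pos hε⟩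
  obtain ⟨f, hf⟩ := PartitionOfUnity.exists_isSubordinate isClosed_univ (fun t : T => U t)
    (fun t => hU t) (by simpa [Set.iUnion_subtype] using hT)
  refine ⟨∑ t : T, f t • const Z (G t), ?_, Submodule.sum_mem _ fun t _ =>
    Submodule.subset_span ⟨f t, G t, rfl⟩⟩
  refine Metric.mem_ball.2 <| (ContinuousMap.dist_le (half_pos hε).le |>.2 fun z => ?_).trans_lt
    (half_lt_self hε)
  have := f.finsum_smul_mem_convex (g := fun t _ => G t) (Set.mem_univ z)
    (fun t ht => Metric.mem_closedBall.2 (hf t (subset_tsupport _ ht)).le)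
    (convex_closedBall (G z) (ε / 2))
  simpa [finsum_eq_sum_of_fintype, dist_comm] using this

theorem IsStarProjection.mul_eq_zero_of_sum_eq_one {A : Type*} [CStarAlgebra A] [PartialOrder A]
    [StarOrderedRing A] {ι : Type*} [Fintype ι] {p : ι → A} (hp : ∀ i, IsStarProjection (p i))
    (hsum : ∑ i, p i = 1) {k m : ι} (hkm : k ≠ m) : p k * p m = 0 := by
  classical
  have hle : p k ≤ 1 - p m := by
    rw [← hsum, ← add_sum_erase _ _ (mem_univ m), add_sub_cancel_left]
    exact single_le_sum (fun i _ => (hp i).nonneg) (mem_erase.2 ⟨hkm, mem_univ k⟩)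
  have := ((hp m).one_sub.mul_right_and_mul_left_of_nonneg_of_le (hp k).nonneg hle).1
  rwa [mul_sub, mul_one, sub_eq_self] at this

structure IsMagicUnitary {R ι : Type*} [Semiring R] [Star R] [Fintype ι] (a : ι → ι → R) :
    Prop where
  isStarProjection : ∀ i j, IsStarProjection (a i j)
  sum_row : ∀ i, ∑ j, a i j = 1
  sum_col : ∀ j, ∑ i, a i j = 1

theorem IsMagicUnitary.sum_mul_eq_ite {A ι : Type*} [CStarAlgebra A] [Fintype ι] [DecidableEq ι]
    {a : ι → ι → A} (ha : IsMagicUnitary a) (k m : ι) :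
    ∑ j, a k j * a m j = if k = m then 1 else 0 := by
  let := CStarAlgebra.spectralOrder A
  let := CStarAlgebra.spectralOrderedRing A
  split_ifs with hkm
  · simp only [hkm, (ha.isStarProjection _ _).isIdempotentElem.eq, ha.sum_row]
  · exact sum_eq_zero fun j _ =>
      IsStarProjection.mul_eq_zero_of_sum_eq_one (ha.isStarProjection · j) (ha.sum_col j) hkm

section alphaMap

variable {Y A : Type*} [TopologicalSpace Y] [NormedRing A] [NormedAlgebra ℂ A] {n : ℕ}

noncomputable def moveSlice (ψ : C(Fin n × Y, ℂ)) (m j : Fin n) : C(Fin n × Y, ℂ) where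
  toFun z := if z.1 = j then ψ (m, z.2) else 0
  continuous_toFun := continuous_prod_of_discrete_left.2 fun i => by
    dsimp only
    split_ifs <;> fun_prop

theorem alphaMap_moveSlice (a : Fin n → Fin n → A) (ψ : C(Fin n × Y, ℂ)) (m j k : Fin n) (y : Y) :
    alphaMap n a (moveSlice ψ m j) (k, y) = ψ (m, y) • a k j := by
  simp [alphaMap, moveSlice]

theorem smul_const_eq_sum_alphaMap_mul {a : Fin n → Fin n → A}
    (ha : ∀ k m, ∑ j, a k j * a m j = if k = m then 1 else 0) (ψ : C(Fin n × Y, ℂ)) (c : A) :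
    ψ • ContinuousMap.const _ c =
      ∑ m, ∑ j, alphaMap n a (moveSlice ψ m j) * ContinuousMap.const _ (a m j * c) := by
  ext ⟨k, y⟩
  simp only [ContinuousMap.smul_apply', ContinuousMap.sum_apply, ContinuousMap.mul_apply,
    alphaMap_moveSlice, ContinuousMap.const_apply, smul_mul_assoc, ← mul_assoc, ← smul_sum,
    ← sum_mul, ha]
  simp

end alphaMap

theorem alphaMap_span_dense_general {Y : Type*} [TopologicalSpace Y] [CompactSpace Y] [T2Space Y]
    {A : Type*} [NormedRing A] [StarRing A] [CStarRing A] [NormedAlgebra ℂ A]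
    [StarModule ℂ A] [CompleteSpace A] (n : ℕ) (a : Fin n → Fin n → A)
    (haproj : ∀ i j, star (a i j) = a i j ∧ a i j * a i j = a i j)
    (harow : ∀ i, ∑ j, a i j = 1) (hacol : ∀ j, ∑ i, a i j = 1) :
    Dense (Submodule.span ℂ {h : C(Fin n × Y, A) | ∃ (F : C(Fin n × Y, ℂ)) (b : A),
      h = alphaMap n a F * ContinuousMap.const (Fin n × Y) b} : Set C(Fin n × Y, A)) := by
  let : CStarAlgebra A := {}
  have ha : IsMagicUnitary a := ⟨fun i j => ⟨(haproj i j).2, (haproj i j).1⟩, harow, hacol⟩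
  refine ContinuousMap.dense_span_smul_const.mono fun _ h =>
    Submodule.span_le_restrictScalars ℝ ℂ _ (Submodule.span_le.2 ?_ h)
  rintro _ ⟨φ, c, rfl⟩
  have hφ : φ • ContinuousMap.const _ c =
      ((Complex.ofRealCLM : C(ℝ, ℂ)).comp φ) • ContinuousMap.const (Fin n × Y) c := by
    ext
    simp [Complex.coe_smul]
  rw [SetLike.mem_coe, hφ, smul_const_eq_sum_alphaMap_mul ha.sum_mul_eq_ite]
  exact Submodule.sum_mem _ fun m _ => Submodule.sum_mem _ fun j _ =>
    Submodule.subset_span ⟨_, _, rfl⟩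

/-- The linear span of `{z ↦ α(F)(z) · a : F ∈ C(Z, ℂ), a ∈ A}` is
dense in `C(Z, A)` (with the supremum norm, which gives the topology of `C(Z, A)`
for compact `Z`). -/
theorem alphaMap_span_dense {Y : Type*} [TopologicalSpace Y] [CompactSpace Y] [T2Space Y]
    {A : Type*} [NormedRing A] [StarRing A] [CStarRing A] [NormedAlgebra ℂ A]
    [StarModule ℂ A] [CompleteSpace A] (n : ℕ) (hn : 0 < n) (a : Fin n → Fin n → A)
    (haproj : ∀ i j, star (a i j) = a i j ∧ a i j * a i j = a i j)
    (harow : ∀ i, ∑ j, a i j = 1) (hacol : ∀ j, ∑ i, a i j = 1) :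
    Dense (Submodule.span ℂ {h : C(Fin n × Y, A) | ∃ (F : C(Fin n × Y, ℂ)) (b : A),
      h = alphaMap n a F * ContinuousMap.const (Fin n × Y) b} : Set C(Fin n × Y, A)) :=
  alphaMap_span_dense_general n a haproj harow hacol
end
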